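/- arXiv:1810.08057 — 2 statements merged into one kernel-verified Lean document; each statement's English description precedes it below -/
import Mathlib

section
/- Let S ⊆ ℝ² be a compact set with path-connected boundary satisfying S = closure(interior(S)). If S is biconvex with respect to orthogonal unit vectors b₁, b₂, then for every point t ∉ S there exist i ∈ {0,1,2,3} and y ∈ ℝ² such that t lies in the open quadrant-cone C_{Rⁱξ}(y) with ξ = (b₁+b₂)/‖b₁+b₂‖, and this cone is disjoint from S (the π/2-lighthouse-by-complements property). -/
/-!
Let `t ∉ S`. The section of `S` by the `b₂`-line through `t` is convex and misses `t`, so it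
lies on one side of `t`, say below it. Suppose both closed upper quadrants at `t` meet `S`. Being
unbounded, each of them then contains a point of the frontier of the bounded set `S`. The
frontier is connected and crosses the `b₂`-line through `t` only below `t`, so it meets the
`b₁`-line through `t` on both sides of `t`, and convexity of that section puts `t` in `S`.
Hence some closed quadrant at `t` misses `S`, and by compactness so does an open quadrant with a
slightly shifted vertex that contains `t`.
-/

noncomputable section

open Set Metric MeasureTheory Filter Real
open scoped RealInnerProductSpace Topology symmDiff

/-- The Euclidean plane. -/
abbrev E2 : Type := EuclideanSpace ℝ (Fin 2)

/-- The line through `p` in direction `v`. -/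
def lineThru (p v : E2) : Set E2 := {x | ∃ t : ℝ, x = p + t • v}

/-- `S` is biconvex with respect to the directions `b₁, b₂`: every section of `S`
along a line in direction `b₁` or `b₂` is convex. -/
def Biconvex (b₁ b₂ : E2) (S : Set E2) : Prop :=
  ∀ p : E2, Convex ℝ (lineThru p b₁ ∩ S) ∧ Convex ℝ (lineThru p b₂ ∩ S)

/-- Open quadrant-cone with vertex `y` and sides in the directions `u, v`
(an open cone of opening angle `π/2` when `u ⊥ v`). -/
def Quadrant (y u v : E2) : Set E2 :=
  {x | ∃ s t : ℝ, 0 < s ∧ 0 < t ∧ x = y + s • u + t • v}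

/-- The four open quadrant-cones at `y` with sides parallel to `b₁, b₂`
(axes `ξ, Rξ, R²ξ, R³ξ` with `ξ = (b₁+b₂)/‖b₁+b₂‖`). -/
def QuadrantCones (b₁ b₂ y : E2) : Set (Set E2) :=
  {Quadrant y b₁ b₂, Quadrant y (-b₁) b₂, Quadrant y b₁ (-b₂), Quadrant y (-b₁) (-b₂)}

/-- First canonical axis rotated counter-clockwise by `θ`. -/
def bvec1 (θ : ℝ) : E2 := (WithLp.equiv 2 (Fin 2 → ℝ)).symm ![Real.cos θ, Real.sin θ]

/-- Second canonical axis rotated counter-clockwise by `θ`. -/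
def bvec2 (θ : ℝ) : E2 := (WithLp.equiv 2 (Fin 2 → ℝ)).symm ![-Real.sin θ, Real.cos θ]

/-- `S` is `θ`-biconvex. -/
def ThetaBiconvex (θ : ℝ) (S : Set E2) : Prop := Biconvex (bvec1 θ) (bvec2 θ) S

/-- The `θ`-biconvex hull: intersection of the complements of all open quadrant-cones
(with sides parallel to the `θ`-rotated axes) that do not meet `A`. -/
def BHull (θ : ℝ) (A : Set E2) : Set E2 :=
  ⋂₀ {T | ∃ y C, C ∈ QuadrantCones (bvec1 θ) (bvec2 θ) y ∧ C ∩ A = ∅ ∧ T = Cᶜ}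

/-- Erosion `A ⊖ B(0,r)`. -/
def Erosion (A : Set E2) (r : ℝ) : Set E2 :=
  ⋃ x ∈ {x : E2 | closedBall x r ⊆ A}, closedBall x r

theorem IsPreconnected.inter_frontier_nonempty {X : Type*} [TopologicalSpace X] {K s : Set X}
    (hK : IsPreconnected K) (hin : (K ∩ s).Nonempty) (hout : (K \ s).Nonempty) :
    (K ∩ frontier s).Nonempty := by
  by_contra h
  have hcover : K ⊆ interior s ∪ (closure s)ᶜ := fun x hx => by
    by_cases hxc : x ∈ closure s
    · exact Or.inl (by_contra fun hxi => h ⟨x, hx, hxc, hxi⟩)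
    · exact Or.inr hxc
  obtain ⟨x, hxK, hxs⟩ := hin
  have hKs : K ⊆ interior s :=
    hK.subset_left_of_subset_union isOpen_interior isClosed_closure.isOpen_compl
      (disjoint_compl_right.mono_left interior_subset_closure) hcover
      ⟨x, hxK, (hcover hxK).resolve_right (not_not_intro (subset_closure hxs))⟩
  obtain ⟨y, hyK, hys⟩ := hout
  exact hys (interior_subset (hKs hyK))

theorem IsPreconnected.exists_pos_eq_zero {X : Type*} [TopologicalSpace X] {K : Set X}
    (hK : IsPreconnected K) {f g : X → ℝ} (hf : ContinuousOn f K) (hg : ContinuousOn g K)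
    (hgap : ∀ x ∈ K, f x = 0 → g x < 0) {p q : X} (hp : p ∈ K) (hq : q ∈ K)
    (hfp : 0 ≤ f p) (hgp : 0 ≤ g p) (hfq : f q ≤ 0) : ∃ w ∈ K, 0 < f w ∧ g w = 0 := by
  -- `min f g` changes sign on `K`; at a zero, `hgap` rules out `f = 0`.
  have hq_neg : min (f q) (g q) < 0 := by
    rcases hfq.lt_or_eq with hlt | heq
    · exact min_lt_of_left_lt hlt
    · exact min_lt_of_right_lt (hgap q hq heq)
  obtain ⟨w, hwK, hw⟩ := hK.intermediate_value (f := fun x => min (f x) (g x)) hq hp (hf.inf hg)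
    ⟨hq_neg.le, le_min hfp hgp⟩
  have hfw : 0 ≤ f w := hw ▸ min_le_left _ _
  have hgw : 0 ≤ g w := hw ▸ min_le_right _ _
  have hfw' : 0 < f w := hfw.lt_of_ne fun h => (hgap w hwK h.symm).not_ge hgw
  refine ⟨w, hwK, hfw', ?_⟩
  rcases min_eq_iff.mp hw with ⟨hf0, -⟩ | ⟨hg0, -⟩
  · exact absurd hf0 hfw'.ne'
  · exact hg0

theorem exists_forall_add_smul_mem_neg {E : Type*} [AddCommGroup E] [Module ℝ E] {S : Set E}
    {t c : E} (hS : OrdConnected {s : ℝ | t + s • c ∈ S}) (ht : t ∉ S) :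
    ∃ d ∈ ({c, -c} : Set E), ∀ s : ℝ, t + s • d ∈ S → s < 0 := by
  by_contra! h
  obtain ⟨s₁, hs₁, hs₁_nonneg⟩ := h c (by simp)
  obtain ⟨s₂, hs₂, hs₂_nonneg⟩ := h (-c) (by simp)
  rw [smul_neg, ← neg_smul] at hs₂
  exact ht (by simpa using hS.out hs₂ hs₁ ⟨neg_nonpos.mpr hs₂_nonneg, hs₁_nonneg⟩)

section Orthonormal

variable {c₁ c₂ : E2}

theorem inner_smul_add_smul_left_of_orthogonal (hc₁ : ‖c₁‖ = 1) (h : ⟪c₁, c₂⟫ = 0) (a b : ℝ) :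
    ⟪a • c₁ + b • c₂, c₁⟫ = a := by
  simp [inner_add_left, real_inner_smul_left, hc₁, real_inner_comm c₁ c₂, h]

theorem inner_smul_add_inner_smul_eq (hc₁ : ‖c₁‖ = 1) (hc₂ : ‖c₂‖ = 1) (h : ⟪c₁, c₂⟫ = 0)
    (x : E2) : ⟪x, c₁⟫ • c₁ + ⟪x, c₂⟫ • c₂ = x := by
  have hon : Orthonormal ℝ ![c₁, c₂] := by
    rw [orthonormal_iff_ite]
    intro i j
    fin_cases i <;> fin_cases j <;> simp [hc₁, hc₂, h, real_inner_comm c₁ c₂]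
  have hspan := hon.linearIndependent.span_eq_top_of_card_eq_finrank (by simp)
  simpa [Fin.sum_univ_two, real_inner_comm x] using
    (OrthonormalBasis.mk hon hspan.ge).sum_repr' x

theorem add_inner_smul_eq_of_inner_eq_zero (hc₁ : ‖c₁‖ = 1) (hc₂ : ‖c₂‖ = 1)
    (h : ⟪c₁, c₂⟫ = 0) {t x : E2} (hx : ⟪x - t, c₂⟫ = 0) : t + ⟪x - t, c₁⟫ • c₁ = x := by
  have := inner_smul_add_inner_smul_eq hc₁ hc₂ h (x - t)
  rw [hx, zero_smul, add_zero] at this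
  rw [this, add_sub_cancel]

end Orthonormal

def closedQuadrant (t u v : E2) : Set E2 := {x | 0 ≤ ⟪x - t, u⟫ ∧ 0 ≤ ⟪x - t, v⟫}

theorem convex_closedQuadrant (t u v : E2) : Convex ℝ (closedQuadrant t u v) := by
  have hhalf (w : E2) : Convex ℝ {x : E2 | 0 ≤ ⟪x - t, w⟫} := by
    simp_rw [inner_sub_left, sub_nonneg, real_inner_comm w]
    exact convex_halfSpace_ge (innerₛₗ ℝ w).isLinear _
  exact (hhalf u).inter (hhalf v)

theorem exists_mem_frontier_inter_closedQuadrant {S : Set E2} (hS : Bornology.IsBounded S)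
    {t u v : E2} (hv : ‖v‖ = 1) (huv : ⟪u, v⟫ = 0) (h : (S ∩ closedQuadrant t u v).Nonempty) :
    (frontier S ∩ closedQuadrant t u v).Nonempty := by
  obtain ⟨q, hqS, hqu, hqv⟩ := h
  obtain ⟨M, hM⟩ := hS.exists_norm_le
  have hqM : ⟪q, v⟫ ≤ M := (real_inner_le_norm q v).trans (by simpa [hv] using hM q hqS)
  set z := q + (M + 1 - ⟪q, v⟫) • v
  have hzv : ⟪z, v⟫ = M + 1 := by simp [z, inner_add_left, real_inner_smul_left, hv]
  have hzQ : z ∈ closedQuadrant t u v := by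
    constructor
    · simpa [z, add_sub_right_comm, inner_add_left, real_inner_smul_left, real_inner_comm u v,
        huv] using hqu
    · simp only [z, add_sub_right_comm, inner_add_left, real_inner_smul_left,
        real_inner_self_eq_norm_sq, hv]
      linarith
  have hzS : z ∉ S := fun hzS => by
    linarith [(real_inner_le_norm z v).trans (by simpa [hv] using hM z hzS)]
  rw [inter_comm]
  exact (convex_closedQuadrant t u v).isPreconnected.inter_frontier_nonempty
    ⟨q, ⟨hqu, hqv⟩, hqS⟩ ⟨z, hzQ, hzS⟩

theorem ordConnected_of_convex_lineThru {S : Set E2} {t c : E2}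
    (h : Convex ℝ (lineThru t c ∩ S)) : OrdConnected {s : ℝ | t + s • c ∈ S} := by
  have hpre : AffineMap.lineMap t (t + c) ⁻¹' (lineThru t c ∩ S) = {s : ℝ | t + s • c ∈ S} := by
    ext s
    simpa [AffineMap.lineMap_apply, lineThru, add_comm] using fun _ => ⟨s, rfl⟩
  rw [← convex_iff_ordConnected, ← hpre]
  exact h.affine_preimage _

section Crossing

variable {S : Set E2} {t c₁ c₂ : E2}

theorem exists_pos_add_smul_mem (hS : IsClosed S) (hF : IsPreconnected (frontier S))
    (hc₁ : ‖c₁‖ = 1) (hc₂ : ‖c₂‖ = 1) (h : ⟪c₁, c₂⟫ = 0)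
    (hcol : ∀ s : ℝ, t + s • c₂ ∈ S → s < 0) {p q : E2} (hp : p ∈ frontier S)
    (hpQ : p ∈ closedQuadrant t c₁ c₂) (hq : q ∈ frontier S) (hq₁ : ⟪q - t, c₁⟫ ≤ 0) :
    ∃ s : ℝ, 0 < s ∧ t + s • c₁ ∈ S := by
  have hcont (c : E2) : ContinuousOn (fun x => ⟪x - t, c⟫) (frontier S) := by fun_prop
  have hgap : ∀ x ∈ frontier S, ⟪x - t, c₁⟫ = 0 → ⟪x - t, c₂⟫ < 0 := fun x hx hx₁ => by
    refine hcol _ ?_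
    rw [add_inner_smul_eq_of_inner_eq_zero hc₂ hc₁ (real_inner_comm c₁ c₂ ▸ h) hx₁]
    exact hS.frontier_subset hx
  obtain ⟨w, hw, hw₁, hw₂⟩ :=
    hF.exists_pos_eq_zero (hcont c₁) (hcont c₂) hgap hp hq hpQ.1 hpQ.2 hq₁
  refine ⟨_, hw₁, ?_⟩
  rw [add_inner_smul_eq_of_inner_eq_zero hc₁ hc₂ h hw₂]
  exact hS.frontier_subset hw

theorem disjoint_closedQuadrant_or_disjoint_closedQuadrant_neg (hS : IsClosed S)
    (hSb : Bornology.IsBounded S) (hF : IsPreconnected (frontier S))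
    (hc₁ : ‖c₁‖ = 1) (hc₂ : ‖c₂‖ = 1) (h : ⟪c₁, c₂⟫ = 0)
    (hrow : OrdConnected {s : ℝ | t + s • c₁ ∈ S}) (hcol : ∀ s : ℝ, t + s • c₂ ∈ S → s < 0) :
    Disjoint S (closedQuadrant t c₁ c₂) ∨ Disjoint S (closedQuadrant t (-c₁) c₂) := by
  by_contra! hmeet
  simp only [not_disjoint_iff_nonempty_inter] at hmeet
  have h' : ⟪-c₁, c₂⟫ = 0 := by simpa [inner_neg_left] using h
  obtain ⟨p, hp, hpQ⟩ := exists_mem_frontier_inter_closedQuadrant hSb hc₂ h hmeet.1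
  obtain ⟨q, hq, hqQ⟩ := exists_mem_frontier_inter_closedQuadrant hSb hc₂ h' hmeet.2
  obtain ⟨s₁, hs₁, h₁⟩ := exists_pos_add_smul_mem hS hF hc₁ hc₂ h hcol hp hpQ hq
    (by simpa [inner_neg_right] using hqQ.1)
  obtain ⟨s₂, hs₂, h₂⟩ := exists_pos_add_smul_mem hS hF (by simpa using hc₁) hc₂ h' hcol hq hqQ hp
    (by simpa [inner_neg_right] using hpQ.1)
  rw [smul_neg, ← neg_smul] at h₂
  have ht : t ∈ S := by simpa using hrow.out h₂ h₁ ⟨by linarith, hs₁.le⟩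
  exact (hcol 0 (by simpa using ht)).false

end Crossing

theorem norm_eq_one_and_inner_eq_zero_of_mem_neg_pair {b₁ b₂ u v : E2} (hb₁ : ‖b₁‖ = 1)
    (hb₂ : ‖b₂‖ = 1) (h : ⟪b₁, b₂⟫ = 0) (hu : u ∈ ({b₁, -b₁} : Set E2))
    (hv : v ∈ ({b₂, -b₂} : Set E2)) : ‖u‖ = 1 ∧ ‖v‖ = 1 ∧ ⟪u, v⟫ = 0 := by
  rcases hu with rfl | rfl <;> rcases hv with rfl | rfl <;> simp [hb₁, hb₂, h]

theorem exists_disjoint_closedQuadrant {S : Set E2} (hS : IsClosed S)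
    (hSb : Bornology.IsBounded S) (hF : IsPreconnected (frontier S)) {b₁ b₂ : E2}
    (hb₁ : ‖b₁‖ = 1) (hb₂ : ‖b₂‖ = 1) (h : ⟪b₁, b₂⟫ = 0) (hbc : Biconvex b₁ b₂ S) {t : E2}
    (ht : t ∉ S) :
    ∃ u ∈ ({b₁, -b₁} : Set E2), ∃ v ∈ ({b₂, -b₂} : Set E2),
      Disjoint S (closedQuadrant t u v) := by
  obtain ⟨v, hv, hcol⟩ :=
    exists_forall_add_smul_mem_neg (ordConnected_of_convex_lineThru (hbc t).2) ht
  obtain ⟨-, hv₁, hb₁v⟩ := norm_eq_one_and_inner_eq_zero_of_mem_neg_pair hb₁ hb₂ h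
    (mem_insert b₁ {-b₁}) hv
  rcases disjoint_closedQuadrant_or_disjoint_closedQuadrant_neg hS hSb hF hb₁ hv₁ hb₁v
    (ordConnected_of_convex_lineThru (hbc t).1) hcol with hd | hd
  · exact ⟨b₁, by simp, v, hv, hd⟩
  · exact ⟨-b₁, by simp, v, hv, hd⟩

theorem exists_mem_quadrant_inter_eq_empty {S : Set E2} (hS : IsCompact S) {t u v : E2}
    (hu : ‖u‖ = 1) (hv : ‖v‖ = 1) (huv : ⟪u, v⟫ = 0) (hd : Disjoint S (closedQuadrant t u v)) :
    ∃ y, t ∈ Quadrant y u v ∧ Quadrant y u v ∩ S = ∅ := by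
  have hmiss : ∀ x ∈ S, 0 < -min ⟪x - t, u⟫ ⟪x - t, v⟫ := fun x hx => by
    have hx' : x ∉ closedQuadrant t u v := disjoint_left.mp hd hx
    rw [closedQuadrant, mem_ofPred_eq, not_and_or, not_le, not_le] at hx'
    simpa [min_lt_iff] using hx'
  obtain ⟨δ, hδ, hδS⟩ := hS.exists_forall_le' (by fun_prop) hmiss
  refine ⟨t - δ • u - δ • v, ⟨δ, δ, hδ, hδ, by abel⟩, ?_⟩
  rw [eq_empty_iff_forall_notMem]
  rintro x ⟨⟨s, r, hs, hr, rfl⟩, hxS⟩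
  have hxt : t - δ • u - δ • v + s • u + r • v - t = (s - δ) • u + (r - δ) • v := by module
  have hxu := inner_smul_add_smul_left_of_orthogonal hu huv (s - δ) (r - δ)
  have hxv := inner_smul_add_smul_left_of_orthogonal hv (real_inner_comm u v ▸ huv) (r - δ) (s - δ)
  rw [add_comm] at hxv
  have hmin := hδS _ hxS
  rw [hxt, hxu, hxv, le_neg, min_le_iff] at hmin
  rcases hmin with hmin | hmin <;> linarith

theorem quadrant_mem_quadrantCones {b₁ b₂ u v : E2} (hu : u ∈ ({b₁, -b₁} : Set E2))
    (hv : v ∈ ({b₂, -b₂} : Set E2)) (y : E2) : Quadrant y u v ∈ QuadrantCones b₁ b₂ y := by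
  rcases hu with rfl | rfl <;> rcases hv with rfl | rfl <;> simp [QuadrantCones]

theorem biconvex_lighthouse_compl_general (S : Set E2) (hScomp : IsCompact S)
    (hbd : IsPathConnected (frontier S))
    (b₁ b₂ : E2) (hb₁ : ‖b₁‖ = 1) (hb₂ : ‖b₂‖ = 1) (horth : ⟪b₁, b₂⟫ = 0)
    (hbc : Biconvex b₁ b₂ S) :
    ∀ t : E2, t ∉ S → ∃ (y : E2) (C : Set E2),
      C ∈ QuadrantCones b₁ b₂ y ∧ t ∈ C ∧ C ∩ S = ∅ := by
  intro t ht
  obtain ⟨u, hu, v, hv, hd⟩ := exists_disjoint_closedQuadrant hScomp.isClosed hScomp.isBounded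
    hbd.isConnected.isPreconnected hb₁ hb₂ horth hbc ht
  obtain ⟨hu₁, hv₁, huv⟩ := norm_eq_one_and_inner_eq_zero_of_mem_neg_pair hb₁ hb₂ horth hu hv
  obtain ⟨y, hty, hyS⟩ := exists_mem_quadrant_inter_eq_empty hScomp hu₁ hv₁ huv hd
  exact ⟨y, _, quadrant_mem_quadrantCones hu hv y, hty, hyS⟩

/-- a compact regular biconvex set has the `π/2`-lighthouse-by-
complements property: every point outside `S` lies in an open quadrant-cone
(with sides parallel to `b₁, b₂`) disjoint from `S`. -/
theorem biconvex_lighthouse_compl (S : Set E2) (hScomp : IsCompact S)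
    (hbd : IsPathConnected (frontier S)) (hreg : S = closure (interior S))
    (b₁ b₂ : E2) (hb₁ : ‖b₁‖ = 1) (hb₂ : ‖b₂‖ = 1) (horth : ⟪b₁, b₂⟫ = 0)
    (hbc : Biconvex b₁ b₂ S) :
    ∀ t : E2, t ∉ S → ∃ (y : E2) (C : Set E2),
      C ∈ QuadrantCones b₁ b₂ y ∧ t ∈ C ∧ C ∩ S = ∅ :=
  biconvex_lighthouse_compl_general S hScomp hbd b₁ b₂ hb₁ hb₂ horth hbc
end
end

section
/- Let S ⊆ ℝ² be a compact set with path-connected boundary, S = closure(interior(S)), that is θ-biconvex, and 𝒳ₙ ⊆ S finite. Then d_H(∂𝔹_θ(S), ∂𝔹_θ(𝒳ₙ)) ≤ 2√2 · d_H(S, 𝒳ₙ), where ∂ denotes topological boundary. -/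
noncomputable section

open Set Metric MeasureTheory Filter Real
open scoped RealInnerProductSpace Topology symmDiff

/-!
Since `S` is closed and its frontier is connected, `S` is connected. For `z ∉ S`, biconvexity puts
the points of `S` on each of the two axis-parallel lines through `z` on one side of `z`, and
connectedness then forces `S` to miss a closed quadrant at `z`; by compactness that quadrant
can be enlarged to an open cone containing `z`. Hence `𝔹_θ(S) = S`.

Fix `r > d_H(S, X)`. A point of `∂S` is within `r` of a sample point, and the segment between
them meets `∂𝔹_θ(X)`. Conversely, a point `x ∈ ∂𝔹_θ(X)` has, arbitrarily close to it, points `y`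
of a cone missing `X`; pushing `y` a distance `√2 r` diagonally into the cone gives a point whose
`r`-ball lies in the cone, hence a point outside `S`, and the segment from it back to `x ∈ S`
meets `∂S`.
-/

lemma orthonormal_bvec (θ : ℝ) : Orthonormal ℝ ![bvec1 θ, bvec2 θ] := by
  rw [orthonormal_iff_ite]
  intro i j
  fin_cases i <;> fin_cases j <;>
    simp [bvec1, bvec2, EuclideanSpace.norm_eq, EuclideanSpace.inner_eq_star_dotProduct,
      dotProduct, mul_comm]

namespace Orthonormal

variable {a b : E2}

lemma inner_pair (h : Orthonormal ℝ ![a, b]) :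
    ⟪a, a⟫ = 1 ∧ ⟪b, b⟫ = 1 ∧ ⟪a, b⟫ = 0 ∧ ⟪b, a⟫ = 0 := by
  have h' := orthonormal_iff_ite.mp h
  exact ⟨by simpa using h' 0 0, by simpa using h' 1 1, by simpa using h' 0 1,
    by simpa using h' 1 0⟩

lemma eq_inner_smul_add_inner_smul (h : Orthonormal ℝ ![a, b]) (w : E2) :
    w = ⟪w, a⟫ • a + ⟪w, b⟫ • b := by
  have hspan := h.linearIndependent.span_eq_top_of_card_eq_finrank (by simp)
  simpa [Fin.sum_univ_two, real_inner_comm] using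
    ((OrthonormalBasis.mk h hspan.ge).sum_repr' w).symm

lemma swap (h : Orthonormal ℝ ![a, b]) : Orthonormal ℝ ![b, a] := by
  simp only [orthonormal_vecCons_iff, Fin.forall_fin_one, Matrix.cons_val_fin_one,
    real_inner_comm, IsEmpty.forall_iff, Orthonormal.of_isEmpty, and_true] at h ⊢
  tauto

lemma norm_add_eq_sqrt_two (h : Orthonormal ℝ ![a, b]) : ‖a + b‖ = √2 := by
  obtain ⟨haa, hbb, hab, hba⟩ := h.inner_pair
  rw [← Real.sqrt_sq (norm_nonneg _), ← real_inner_self_eq_norm_sq, inner_add_add_self,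
    haa, hbb, hab, hba]
  norm_num

end Orthonormal

lemma orthonormal_of_eq_or_eq_neg {a b b₁ b₂ : E2} (h : Orthonormal ℝ ![b₁, b₂])
    (ha : a = b₁ ∨ a = -b₁) (hb : b = b₂ ∨ b = -b₂) : Orthonormal ℝ ![a, b] :=
  h.orthonormal_of_forall_eq_or_eq_neg (Fin.forall_fin_two.mpr ⟨ha, hb⟩)

lemma mem_quadrantCones_iff {b₁ b₂ y : E2} {C : Set E2} :
    C ∈ QuadrantCones b₁ b₂ y ↔
      ∃ a b, (a = b₁ ∨ a = -b₁) ∧ (b = b₂ ∨ b = -b₂) ∧ C = Quadrant y a b := by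
  constructor
  · rintro (rfl | rfl | rfl | rfl) <;> simp
  · rintro ⟨a, b, rfl | rfl, rfl | rfl, rfl⟩ <;> simp [QuadrantCones]

lemma mem_quadrant_iff {a b y x : E2} (h : Orthonormal ℝ ![a, b]) :
    x ∈ Quadrant y a b ↔ 0 < ⟪x - y, a⟫ ∧ 0 < ⟪x - y, b⟫ := by
  obtain ⟨haa, hbb, hab, hba⟩ := h.inner_pair
  constructor
  · rintro ⟨s, t, hs, ht, rfl⟩
    rw [add_assoc, add_sub_cancel_left]
    simpa only [inner_add_left, real_inner_smul_left, haa, hbb, hab, hba, mul_one, mul_zero,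
      add_zero, zero_add] using ⟨hs, ht⟩
  · rintro ⟨hs, ht⟩
    refine ⟨_, _, hs, ht, ?_⟩
    rw [add_assoc, ← h.eq_inner_smul_add_inner_smul]
    abel

section Topology

variable {α : Type*} [TopologicalSpace α]

lemma IsPreconnected.inter_frontier_nonempty_s12 {s t : Set α} (hs : IsPreconnected s)
    (hst : (s ∩ t).Nonempty) (hsdt : (s \ t).Nonempty) : (s ∩ frontier t).Nonempty := by
  by_contra h
  have hcover : s ⊆ interior t ∪ (closure t)ᶜ := fun x hx => by
    by_cases hxt : x ∈ closure t
    · exact .inl (by_contra fun hxi => h ⟨x, hx, hxt, hxi⟩)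
    · exact .inr hxt
  rcases hs.subset_or_subset isOpen_interior isClosed_closure.isOpen_compl
    (disjoint_compl_right.mono_left interior_subset_closure) hcover with hsub | hsub
  · obtain ⟨x, hxs, hxt⟩ := hsdt
    exact hxt (interior_subset (hsub hxs))
  · obtain ⟨x, hxs, hxt⟩ := hst
    exact hsub hxs (subset_closure hxt)

lemma IsClosed.isPreconnected_of_isPreconnected_frontier [PreconnectedSpace α] {s : Set α}
    (hs : IsClosed s) (hfr : IsPreconnected (frontier s)) : IsPreconnected s := by
  rw [isPreconnected_iff_subset_of_fully_disjoint_closed hs]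
  intro u v hu hv hsuv huv
  have key : ∀ u v : Set α, IsClosed u → IsClosed v → s ⊆ u ∪ v → Disjoint u v →
      frontier s ⊆ u → s ⊆ u ∨ s ⊆ v := by
    intro u v hu hv hsuv huv hfu
    -- `s ∩ v` avoids the frontier of `s`, hence is open as well as closed
    have hsv : s ∩ v = interior s ∩ uᶜ := by
      refine Subset.antisymm (fun x ⟨hxs, hxv⟩ => ⟨?_, huv.notMem_of_mem_right hxv⟩)
        (fun x ⟨hxi, hxu⟩ => ⟨interior_subset hxi, (hsuv (interior_subset hxi)).resolve_left hxu⟩)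
      by_contra hxi
      exact huv.notMem_of_mem_right hxv (hfu ⟨subset_closure hxs, hxi⟩)
    rcases isClopen_iff.mp ⟨hs.inter hv, hsv ▸ isOpen_interior.inter hu.isOpen_compl⟩ with h | h
    · exact .inl fun x hxs => (hsuv hxs).resolve_right fun hxv => h.subset ⟨hxs, hxv⟩
    · exact .inr fun x _ => (h ▸ mem_univ x : x ∈ s ∩ v).2
  rcases (isPreconnected_iff_subset_of_fully_disjoint_closed isClosed_frontier).mp hfr u v hu hv
    (hs.frontier_subset.trans hsuv) huv with h | h
  · exact key u v hu hv hsuv huv h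
  · exact (key v u hv hu (union_comm u v ▸ hsuv) huv.symm h).symm

end Topology

lemma exists_mem_frontier_dist_le {E : Type*} [NormedAddCommGroup E] [NormedSpace ℝ E]
    {s : Set E} {w m : E} (hw : w ∉ interior s) (hm : m ∈ closure s) :
    ∃ q ∈ frontier s, dist w q ≤ dist w m := by
  by_cases hws : w ∈ closure s
  · exact ⟨w, ⟨hws, hw⟩, by simp⟩
  obtain ⟨q, hqseg, hq⟩ := (convex_segment w m).isPreconnected.inter_frontier_nonempty_s12
    ⟨m, right_mem_segment ℝ w m, hm⟩ ⟨w, left_mem_segment ℝ w m, hws⟩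
  exact ⟨q, frontier_closure_subset hq, by
    simpa [dist_comm] using segment_subset_closedBall_left w m hqseg⟩

lemma quadrant_subset_quadrant {y₀ y a b : E2} (hy : y ∈ Quadrant y₀ a b) :
    Quadrant y a b ⊆ Quadrant y₀ a b := by
  obtain ⟨s, t, hs, ht, rfl⟩ := hy
  rintro x ⟨s', t', hs', ht', rfl⟩
  exact ⟨s + s', t + t', by positivity, by positivity, by module⟩

lemma mem_quadrant_sub_smul_add_iff {a b z x : E2} (h : Orthonormal ℝ ![a, b]) (δ : ℝ) :
    x ∈ Quadrant (z - δ • (a + b)) a b ↔ -δ < ⟪x - z, a⟫ ∧ -δ < ⟪x - z, b⟫ := by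
  obtain ⟨haa, hbb, hab, hba⟩ := h.inner_pair
  have hx : x - (z - δ • (a + b)) = (x - z) + δ • a + δ • b := by module
  rw [mem_quadrant_iff h, hx]
  simp only [inner_add_left, real_inner_smul_left, haa, hbb, hab, hba]
  constructor <;> rintro ⟨h₁, h₂⟩ <;> constructor <;> linarith

lemma ball_add_smul_subset_quadrant {a b : E2} (h : Orthonormal ℝ ![a, b]) (y : E2) (r : ℝ) :
    ball (y + r • (a + b)) r ⊆ Quadrant y a b := by
  intro p hp
  set v := p - (y + r • (a + b))
  have hcoord : ∀ e : E2, ‖e‖ = 1 → -r < ⟪v, e⟫ := fun e he => by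
    have := abs_real_inner_le_norm v e
    rw [he, mul_one] at this
    linarith [neg_abs_le ⟪v, e⟫, show ‖v‖ < r by rwa [← dist_eq_norm]]
  simpa using (mem_quadrant_sub_smul_add_iff h r (z := y + r • (a + b))).mpr
    ⟨hcoord a (h.norm_eq_one 0), hcoord b (h.norm_eq_one 1)⟩

lemma exists_quadrant_mem_disjoint_of_isCompact {a b z : E2} (h : Orthonormal ℝ ![a, b])
    {S : Set E2} (hS : IsCompact S) (hSz : ∀ x ∈ S, ⟪x - z, a⟫ < 0 ∨ ⟪x - z, b⟫ < 0) :
    ∃ y, z ∈ Quadrant y a b ∧ Quadrant y a b ∩ S = ∅ := by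
  obtain ⟨δ, hδ, hδS⟩ := hS.exists_forall_le' (a := 0)
    (f := fun x => max (-⟪x - z, a⟫) (-⟪x - z, b⟫)) (by fun_prop)
    fun x hx => lt_max_iff.mpr ((hSz x hx).imp neg_pos.mpr neg_pos.mpr)
  refine ⟨z - δ • (a + b), (mem_quadrant_sub_smul_add_iff h δ).mpr (by simp [hδ]), ?_⟩
  refine eq_empty_iff_forall_notMem.mpr fun x ⟨hxq, hxS⟩ => ?_
  rw [mem_quadrant_sub_smul_add_iff h] at hxq
  rcases le_max_iff.mp (hδS x hxS) with h | h <;> linarith [hxq.1, hxq.2]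

lemma exists_eq_or_eq_neg_forall_pos {S : Set E2} {z d : E2}
    (hconv : Convex ℝ (lineThru z d ∩ S)) (hz : z ∉ S) :
    ∃ e, (e = d ∨ e = -d) ∧ ∀ t : ℝ, z + t • e ∈ S → 0 < t := by
  have hpre : (fun t : ℝ => z + t • d) ⁻¹' S =
      AffineMap.lineMap z (z + d) ⁻¹' (lineThru z d ∩ S) := by
    ext t
    simp only [mem_preimage, AffineMap.lineMap_apply_module', add_sub_cancel_right, add_comm z,
      lineThru, mem_inter_iff, mem_ofPred_eq]
    exact ⟨fun h => ⟨⟨t, rfl⟩, h⟩, And.right⟩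
  have hP : ((fun t : ℝ => z + t • d) ⁻¹' S).OrdConnected := by
    rw [← convex_iff_ordConnected, hpre]
    exact hconv.affine_preimage _
  by_cases hd : ∀ t : ℝ, z + t • d ∈ S → 0 < t
  · exact ⟨d, .inl rfl, hd⟩
  push Not at hd
  obtain ⟨t₁, ht₁S, ht₁⟩ := hd
  refine ⟨-d, .inr rfl, fun t htS => lt_of_not_ge fun ht => hz ?_⟩
  simpa using hP.out ht₁S (show z + (-t) • d ∈ S by simpa using htS) ⟨ht₁, by linarith⟩

lemma pos_inner_of_inner_eq_zero {a b z x : E2} (h : Orthonormal ℝ ![a, b]) {S : Set E2}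
    (hray : ∀ t : ℝ, z + t • a ∈ S → 0 < t) (hx : x ∈ S) (hb : ⟪x - z, b⟫ = 0) :
    0 < ⟪x - z, a⟫ := by
  have hxz := h.eq_inner_smul_add_inner_smul (x - z)
  rw [hb, zero_smul, add_zero, sub_eq_iff_eq_add'] at hxz
  exact hray _ (hxz ▸ hx)

lemma exists_signs_forall_inner_neg {b₁ b₂ : E2} (hb : Orthonormal ℝ ![b₁, b₂]) {S : Set E2}
    (hSc : IsPreconnected S) (hbc : Biconvex b₁ b₂ S) {z : E2} (hz : z ∉ S) :
    ∃ a b, (a = b₁ ∨ a = -b₁) ∧ (b = b₂ ∨ b = -b₂) ∧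
      ∀ x ∈ S, ⟪x - z, a⟫ < 0 ∨ ⟪x - z, b⟫ < 0 := by
  obtain ⟨e₁, he₁, hray₁⟩ := exists_eq_or_eq_neg_forall_pos (hbc z).1 hz
  obtain ⟨e₂, he₂, hray₂⟩ := exists_eq_or_eq_neg_forall_pos (hbc z).2 hz
  have he := orthonormal_of_eq_or_eq_neg hb he₁ he₂
  set u : Set E2 := {x | ⟪x - z, e₁⟫ < 0} ∩ {x | ⟪x - z, e₂⟫ < 0}
  set v : Set E2 := {x | 0 < ⟪x - z, e₁⟫} ∪ {x | 0 < ⟪x - z, e₂⟫}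
  have hcover : S ⊆ u ∪ v := fun x hx => by
    by_cases hpos : 0 < ⟪x - z, e₁⟫ ∨ 0 < ⟪x - z, e₂⟫
    · exact .inr hpos
    push Not at hpos
    refine .inl ⟨hpos.1.lt_of_ne fun h0 => ?_, hpos.2.lt_of_ne fun h0 => ?_⟩
    · linarith [pos_inner_of_inner_eq_zero he.swap hray₂ hx h0, hpos.2]
    · linarith [pos_inner_of_inner_eq_zero he hray₁ hx h0, hpos.1]
  have huv : Disjoint u v := disjoint_left.mpr fun x hxu hxv => by
    obtain ⟨h₁, h₂⟩ : ⟪x - z, e₁⟫ < 0 ∧ ⟪x - z, e₂⟫ < 0 := hxu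
    rcases hxv with (h : 0 < ⟪x - z, e₁⟫) | (h : 0 < ⟪x - z, e₂⟫) <;> linarith
  have hu : IsOpen u := (isOpen_lt (by fun_prop) continuous_const).inter
    (isOpen_lt (by fun_prop) continuous_const)
  have hv : IsOpen v := (isOpen_lt continuous_const (by fun_prop)).union
    (isOpen_lt continuous_const (by fun_prop))
  rcases hSc.subset_or_subset hu hv huv hcover with hS | hS
  · exact ⟨e₁, e₂, he₁, he₂, fun x hx => .inl (hS hx).1⟩
  · refine ⟨-e₁, -e₂, by rcases he₁ with rfl | rfl <;> simp, by rcases he₂ with rfl | rfl <;> simp,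
      fun x hx => ?_⟩
    simpa only [v, mem_union, mem_ofPred_eq, inner_neg_right, neg_lt_zero] using hS hx

lemma exists_quadrantCone_mem_disjoint {b₁ b₂ : E2} (hb : Orthonormal ℝ ![b₁, b₂])
    {S : Set E2} (hS : IsCompact S) (hSc : IsPreconnected S) (hbc : Biconvex b₁ b₂ S) {z : E2}
    (hz : z ∉ S) : ∃ y, ∃ C ∈ QuadrantCones b₁ b₂ y, C ∩ S = ∅ ∧ z ∈ C := by
  obtain ⟨a, b, ha, hb', hSz⟩ := exists_signs_forall_inner_neg hb hSc hbc hz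
  obtain ⟨y, hzy, hyS⟩ :=
    exists_quadrant_mem_disjoint_of_isCompact (orthonormal_of_eq_or_eq_neg hb ha hb') hS hSz
  exact ⟨y, _, mem_quadrantCones_iff.mpr ⟨a, b, ha, hb', rfl⟩, hyS, hzy⟩

lemma notMem_bHull_iff {θ : ℝ} {A : Set E2} {z : E2} :
    z ∉ BHull θ A ↔ ∃ y, ∃ C ∈ QuadrantCones (bvec1 θ) (bvec2 θ) y, C ∩ A = ∅ ∧ z ∈ C := by
  simp [BHull]

lemma subset_bHull (θ : ℝ) (A : Set E2) : A ⊆ BHull θ A := fun x hx => by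
  by_contra hxB
  obtain ⟨y, C, -, hCA, hxC⟩ := notMem_bHull_iff.mp hxB
  exact (eq_empty_iff_forall_notMem.mp hCA) x ⟨hxC, hx⟩

lemma bHull_mono {θ : ℝ} {A B : Set E2} (h : A ⊆ B) : BHull θ A ⊆ BHull θ B := fun x hx => by
  by_contra hxB
  obtain ⟨y, C, hC, hCB, hxC⟩ := notMem_bHull_iff.mp hxB
  exact notMem_bHull_iff.mpr ⟨y, C, hC, subset_empty_iff.mp (hCB ▸ inter_subset_inter_right C h),
    hxC⟩ hx

lemma bHull_eq_self {θ : ℝ} {S : Set E2} (hS : IsCompact S) (hSc : IsPreconnected S)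
    (hbc : ThetaBiconvex θ S) : BHull θ S = S := by
  refine (subset_bHull θ S).antisymm' fun z hzB => ?_
  by_contra hz
  exact notMem_bHull_iff.mpr (exists_quadrantCone_mem_disjoint (orthonormal_bvec θ) hS hSc hbc hz)
    hzB

lemma exists_mem_frontier_bHull_dist_lt {θ r : ℝ} {S X : Set E2} (hS : IsClosed S)
    (hXS : BHull θ X ⊆ S) (hfin : hausdorffEDist S X ≠ ⊤) (hr : hausdorffDist S X < r)
    {x : E2} (hx : x ∈ frontier S) : ∃ q ∈ frontier (BHull θ X), dist x q < r := by
  obtain ⟨p, hpX, hxp⟩ := exists_dist_lt_of_hausdorffDist_lt (hS.frontier_subset hx) hr hfin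
  obtain ⟨q, hq, hxq⟩ := exists_mem_frontier_dist_le (s := BHull θ X)
    (fun h => hx.2 (interior_mono hXS h)) (subset_closure (subset_bHull θ X hpX))
  exact ⟨q, hq, hxq.trans_lt hxp⟩

lemma exists_mem_frontier_dist_lt_of_mem_frontier_bHull {θ r : ℝ} {S X : Set E2}
    (hS : IsClosed S) (hXS : BHull θ X ⊆ S) (hfin : hausdorffEDist S X ≠ ⊤)
    (hr : hausdorffDist S X < r) {x : E2} (hx : x ∈ frontier (BHull θ X)) :
    ∃ q ∈ frontier S, dist x q < 2 * √2 * r := by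
  have hr0 : 0 < r := hausdorffDist_nonneg.trans_lt hr
  have hxS : x ∈ S := closure_minimal hXS hS (frontier_subset_closure hx)
  have hx' : x ∈ closure (BHull θ X)ᶜ := frontier_subset_closure (by rwa [frontier_compl])
  obtain ⟨y, hyB, hxy⟩ := Metric.mem_closure_iff.mp hx' (√2 * r) (by positivity)
  obtain ⟨y₀, C, hC, hCX, hyC⟩ := notMem_bHull_iff.mp hyB
  obtain ⟨a, b, ha, hb, rfl⟩ := mem_quadrantCones_iff.mp hC
  have hab := orthonormal_of_eq_or_eq_neg (orthonormal_bvec θ) ha hb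
  have hy' : y + r • (a + b) ∉ S := fun hy'S => by
    obtain ⟨p, hpX, hp⟩ := exists_dist_lt_of_hausdorffDist_lt hy'S hr hfin
    have hpC : p ∈ Quadrant y₀ a b :=
      quadrant_subset_quadrant hyC (ball_add_smul_subset_quadrant hab y r (mem_ball'.mpr hp))
    exact eq_empty_iff_forall_notMem.mp hCX p ⟨hpC, hpX⟩
  obtain ⟨q, hq, hxq⟩ := exists_mem_frontier_dist_le (s := Sᶜ)
    (by rw [interior_compl, notMem_compl_iff]; exact subset_closure hxS)
    (subset_closure hy')
  have hyy' : dist y (y + r • (a + b)) = √2 * r := by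
    rw [dist_self_add_right, norm_smul, hab.norm_add_eq_sqrt_two, Real.norm_of_nonneg hr0.le,
      mul_comm]
  refine ⟨q, frontier_compl S ▸ hq, ?_⟩
  calc dist x q ≤ dist x (y + r • (a + b)) := hxq
    _ ≤ dist x y + dist y (y + r • (a + b)) := dist_triangle _ _ _
    _ < √2 * r + √2 * r := by rw [hyy']; gcongr
    _ = 2 * √2 * r := by ring

theorem bhull_boundary_bound_general (S : Set E2) (hScomp : IsCompact S)
    (hbd : IsPathConnected (frontier S))
    (θ : ℝ) (hbc : ThetaBiconvex θ S)
    (X : Set E2) (hXS : X ⊆ S) (hXne : X.Nonempty) :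
    hausdorffDist (frontier (BHull θ S)) (frontier (BHull θ X)) ≤
      2 * Real.sqrt 2 * hausdorffDist S X := by
  have hBS : BHull θ S = S := bHull_eq_self hScomp
    (hScomp.isClosed.isPreconnected_of_isPreconnected_frontier hbd.isConnected.isPreconnected) hbc
  have hBXS : BHull θ X ⊆ S := hBS ▸ bHull_mono hXS
  have hfin : hausdorffEDist S X ≠ ⊤ := hausdorffEDist_ne_top_of_nonempty_of_bounded
    (hXne.mono hXS) hXne hScomp.isBounded (hScomp.isBounded.subset hXS)
  have hbound : ∀ r, hausdorffDist S X < r →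
      hausdorffDist (frontier S) (frontier (BHull θ X)) ≤ 2 * √2 * r := fun r hr => by
    have hr0 : 0 < r := hausdorffDist_nonneg.trans_lt hr
    refine hausdorffDist_le_of_mem_dist (by positivity) (fun x hx => ?_) (fun x hx => ?_)
    · obtain ⟨q, hq, hxq⟩ := exists_mem_frontier_bHull_dist_lt hScomp.isClosed hBXS hfin hr hx
      exact ⟨q, hq, hxq.le.trans (le_mul_of_one_le_left hr0.le (by linarith [one_lt_sqrt_two]))⟩
    · obtain ⟨q, hq, hxq⟩ :=
        exists_mem_frontier_dist_lt_of_mem_frontier_bHull hScomp.isClosed hBXS hfin hr hx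
      exact ⟨q, hq, hxq.le⟩
  rw [hBS]
  exact ge_of_tendsto (((continuous_const_mul _).tendsto _).mono_left nhdsWithin_le_nhds)
    (eventually_nhdsWithin_of_forall (s := Ioi _) hbound)

/-- Hausdorff distance bound between the boundaries of the
biconvex hulls of the sample and of `S`. -/
theorem bhull_boundary_bound (S : Set E2) (hScomp : IsCompact S)
    (hbd : IsPathConnected (frontier S)) (hreg : S = closure (interior S))
    (θ : ℝ) (hθ : θ ∈ Ico (0 : ℝ) (π / 2)) (hbc : ThetaBiconvex θ S)
    (X : Set E2) (hXS : X ⊆ S) (hXfin : X.Finite) (hXne : X.Nonempty) :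
    hausdorffDist (frontier (BHull θ S)) (frontier (BHull θ X)) ≤
      2 * Real.sqrt 2 * hausdorffDist S X :=
  bhull_boundary_bound_general S hScomp hbd θ hbc X hXS hXne
end
end
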